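/- Let n₁, n₂, m₃ be natural numbers and let s ∈ ℂ with Re s > 1/2. Then ∫_{Y>0} Y₁₁^{n₁} · Y₂₂^{n₂} · Y₁₂^{2m₃} · det(Y)^s · e^{−tr(Y)} dY_inv = Γ₂(s) · ((2m₃)! / (2^{2m₃} · m₃!)) · Σ_{k=0}^{min(n₁,n₂)} (−1)^k · C(n₁,k) · C(n₂,k) · k! · Π_{l=0}^{n₁+n₂+m₃−k−1}(s+l). -/

import Mathlib

/-!
Substituting `Y₁₂ = √(Y₁₁ Y₂₂) u` with `u ∈ (-1, 1)` has Jacobian `√(Y₁₁ Y₂₂)` and turns `det Y`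
into `Y₁₁ Y₂₂ (1 - u²)`, so the integral factors as
`Γ(s + m₃ + n₁) Γ(s + m₃ + n₂) ∫₋₁¹ u^{2m₃} (1 - u²)^{s - 3/2} du`, and the last integral is
`B(m₃ + 1/2, s - 1/2)` after `v = u²`. With `Γ(a + n) = Γ(a) (a)ₙ` and
`Γ(m₃ + 1/2) = √π (2m₃)! / (4^{m₃} m₃!)` it remains to expand `(a)_{n₁} (a)_{n₂}` in rising
factorials; this is the Chu–Vandermonde identity `(x + y)ₙ = ∑ C(n, k) (x)ₖ (y)_{n-k}` at
`x = -n₁`, `y = a + n₁`, where `(-n₁)ₖ = (-1)ᵏ C(n₁, k) k!`.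
-/

open MeasureTheory

/-- The rank-two Gamma function `Γ₂(s) = √π Γ(s) Γ(s - 1/2)`. -/
noncomputable def Gamma2 (s : ℂ) : ℂ :=
  (Real.sqrt Real.pi : ℂ) * Complex.Gamma s * Complex.Gamma (s - 1 / 2)

open Set Polynomial Real
open scoped Nat

namespace Polynomial

open Finset

variable {R : Type*}

theorem ascPochhammer_eval_eq_prod_range [CommSemiring R] (n : ℕ) (r : R) :
    (ascPochhammer R n).eval r = ∏ j ∈ range n, (r + j) := by
  induction n with
  | zero => simp
  | succ n ih => simp [ascPochhammer_succ_right, ih, prod_range_succ]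

theorem ascPochhammer_add_eval [CommSemiring R] (n m : ℕ) (r : R) :
    (ascPochhammer R (n + m)).eval r =
      (ascPochhammer R n).eval r * (ascPochhammer R m).eval (r + n) := by
  rw [← ascPochhammer_mul, eval_mul, eval_comp]
  simp

theorem ascPochhammer_eval_add [CommSemiring R] (n : ℕ) (x y : R) :
    (ascPochhammer R n).eval (x + y) = ∑ ij ∈ antidiagonal n,
      n.choose ij.1 * ((ascPochhammer R ij.1).eval x * (ascPochhammer R ij.2).eval y) := by
  induction n with
  | zero => simp
  | succ n ih =>
    rw [sum_antidiagonal_choose_succ_mul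
      (fun i j => (ascPochhammer R i).eval x * (ascPochhammer R j).eval y),
      ← sum_add_distrib, ascPochhammer_succ_eval, ih, sum_mul]
    refine sum_congr rfl fun ij hij => ?_
    rw [HasAntidiagonal.mem_antidiagonal] at hij
    rw [Nat.choose_symm_of_eq_add hij.symm, ascPochhammer_succ_eval, ascPochhammer_succ_eval,
      ← hij, Nat.cast_add]
    ring

theorem ascPochhammer_eval_neg_natCast [CommRing R] (n k : ℕ) :
    (ascPochhammer R k).eval (-(n : R)) = (-1) ^ k * n.choose k * k.factorial := by
  rw [ascPochhammer_eval_neg_eq_descPochhammer, descPochhammer_eval_eq_descFactorial,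
    Nat.descFactorial_eq_factorial_mul_choose]
  push_cast
  ring

theorem ascPochhammer_eval_mul_eq_sum [CommRing R] (n₁ n₂ : ℕ) (r : R) :
    (ascPochhammer R n₁).eval r * (ascPochhammer R n₂).eval r =
      ∑ k ∈ range (min n₁ n₂ + 1), (-1) ^ k * n₁.choose k * n₂.choose k * k.factorial *
        (ascPochhammer R (n₁ + n₂ - k)).eval r := by
  have h₂ : (ascPochhammer R n₂).eval r = ∑ k ∈ range (n₂ + 1), n₂.choose k *
      ((ascPochhammer R k).eval (-(n₁ : R)) * (ascPochhammer R (n₂ - k)).eval (r + n₁)) := by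
    rw [← Nat.sum_antidiagonal_eq_sum_range_succ (fun i j => n₂.choose i *
      ((ascPochhammer R i).eval (-(n₁ : R)) * (ascPochhammer R j).eval (r + n₁))),
      ← ascPochhammer_eval_add, neg_add_cancel_comm_assoc]
  rw [h₂, mul_sum]
  refine (sum_subset (range_subset_range.2 (by omega)) fun k hk hk' => ?_).symm.trans
    (sum_congr rfl fun k hk => ?_)
  · have : n₁ < k := by simp only [Finset.mem_range] at hk hk'; omega
    simp [ascPochhammer_eval_neg_natCast, Nat.choose_eq_zero_of_lt this]
  · have : k ≤ n₂ := by simp only [Finset.mem_range] at hk; omega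
    rw [ascPochhammer_eval_neg_natCast, show n₁ + n₂ - k = n₁ + (n₂ - k) by omega,
      ascPochhammer_add_eval]
    ring

theorem sum_choose_mul_prod_range_eq [CommRing R] (n₁ n₂ m : ℕ) (s : R) :
    ∑ k ∈ range (min n₁ n₂ + 1), (-1) ^ k * (n₁.choose k : R) * (n₂.choose k : R) * (k ! : R) *
        ∏ l ∈ range (n₁ + n₂ + m - k), (s + l) =
      (ascPochhammer R m).eval s *
        ((ascPochhammer R n₁).eval (s + m) * (ascPochhammer R n₂).eval (s + m)) := by
  rw [ascPochhammer_eval_mul_eq_sum, mul_sum]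
  refine sum_congr rfl fun k hk => ?_
  have hk' : k ≤ n₁ + n₂ := by simp only [Finset.mem_range] at hk; omega
  rw [← ascPochhammer_eval_eq_prod_range, show n₁ + n₂ + m - k = m + (n₁ + n₂ - k) by omega,
    ascPochhammer_add_eval]
  ring

end Polynomial

namespace Complex

theorem ne_neg_natCast_of_re_pos {z : ℂ} (hz : 0 < z.re) (k : ℕ) : z ≠ -k := by
  rintro rfl
  simp only [neg_re, natCast_re, Left.neg_pos_iff] at hz
  exact (Nat.cast_nonneg k).not_gt hz

theorem Gamma_add_nat_eq_mul {z : ℂ} (hz : ∀ k : ℕ, z ≠ -k) (n : ℕ) :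
    Gamma (z + n) = Gamma z * (ascPochhammer ℂ n).eval z := by
  rw [← Gamma_add_nat_div_Gamma_eq z hz, mul_div_cancel₀ _ (Gamma_ne_zero hz)]

theorem Gamma_nat_add_half (m : ℕ) :
    Gamma (m + 1 / 2) = √π * (2 * m)! / (2 ^ (2 * m) * m !) := by
  have hfact : ((2 * m)! : ℝ) = 2 ^ m * m ! * (2 * m - 1 : ℕ)‼ := by
    rcases m with _ | m
    · simp
    · rw [show 2 * (m + 1) = 2 * m + 1 + 1 by ring, Nat.factorial_eq_mul_doubleFactorial,
        show 2 * m + 1 + 1 = 2 * (m + 1) by ring, Nat.doubleFactorial_two_mul,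
        show 2 * (m + 1) - 1 = 2 * m + 1 by omega]
      push_cast
      ring
  rw [show (m : ℂ) + 1 / 2 = ((m + 1 / 2 : ℝ) : ℂ) by push_cast; ring, Gamma_ofReal,
    Real.Gamma_nat_add_half, ← ofReal_natCast, hfact]
  have hm : (m ! : ℂ) ≠ 0 := Nat.cast_ne_zero.2 m.factorial_ne_zero
  push_cast
  field_simp
  ring

end Complex

theorem image_sq_Ioo_zero_one : (fun x : ℝ => x ^ 2) '' Ioo 0 1 = Ioo 0 1 := by
  simpa using (continuous_pow 2).continuousOn.image_Ioo_of_strictMonoOn zero_le_one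
    ((pow_left_strictMonoOn₀ (M₀ := ℝ) two_ne_zero).mono fun _ hx => hx.1)

theorem injOn_sq_Ioo_zero_one : InjOn (fun x : ℝ => x ^ 2) (Ioo 0 1) :=
  (pow_left_strictMonoOn₀ (M₀ := ℝ) two_ne_zero).injOn.mono fun _ hx => hx.1.le

section

variable {E : Type*} [NormedAddCommGroup E] [NormedSpace ℝ E]

theorem integral_Ioo_neg_of_even {f : ℝ → E} {a : ℝ} (ha : 0 ≤ a) (heven : ∀ x, f (-x) = f x)
    (hf : IntegrableOn f (Ioo 0 a)) :
    ∫ x in Ioo (-a) a, f x = (2 : ℝ) • ∫ x in Ioo 0 a, f x := by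
  have hpos : IntervalIntegrable f volume 0 a :=
    (intervalIntegrable_iff_integrableOn_Ioo_of_le ha).2 hf
  have hneg : IntervalIntegrable f volume (-a) 0 := by
    simpa [heven] using ((IntervalIntegrable.iff_comp_neg).1 hpos).symm
  have hreflect : ∫ x in (-a)..0, f x = ∫ x in 0..a, f x := by
    simpa [heven] using intervalIntegral.integral_comp_neg (a := -a) (b := 0) f
  rw [← integral_Ioc_eq_integral_Ioo, ← integral_Ioc_eq_integral_Ioo,
    ← intervalIntegral.integral_of_le (by linarith), ← intervalIntegral.integral_of_le ha,
    ← intervalIntegral.integral_add_adjacent_intervals hneg hpos, hreflect, two_smul]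

theorem integral_Ioo_zero_one_comp_sq (g : ℝ → E) :
    ∫ x in Ioo 0 1, (2 * x) • g (x ^ 2) = ∫ y in Ioo 0 1, g y := by
  conv_rhs => rw [← image_sq_Ioo_zero_one]
  rw [integral_image_eq_integral_abs_deriv_smul measurableSet_Ioo
    (fun x _ => (hasDerivAt_pow 2 x).hasDerivWithinAt) injOn_sq_Ioo_zero_one]
  refine setIntegral_congr_fun measurableSet_Ioo fun x hx => ?_
  simp [abs_of_pos hx.1]

theorem integrableOn_Ioo_zero_one_comp_sq_iff (g : ℝ → E) :
    IntegrableOn (fun x => (2 * x) • g (x ^ 2)) (Ioo 0 1) ↔ IntegrableOn g (Ioo 0 1) := by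
  conv_rhs => rw [← image_sq_Ioo_zero_one]
  rw [integrableOn_image_iff_integrableOn_abs_deriv_smul measurableSet_Ioo
    (fun x _ => (hasDerivAt_pow 2 x).hasDerivWithinAt) injOn_sq_Ioo_zero_one]
  refine integrableOn_congr_fun (fun x hx => ?_) measurableSet_Ioo
  simp [abs_of_pos hx.1]

end

theorem ofReal_sq_cpow_mul_self {x : ℝ} (hx : 0 < x) (m : ℕ) :
    ((x ^ 2 : ℝ) : ℂ) ^ ((m : ℂ) + 1 / 2 - 1) * x = (x : ℂ) ^ (2 * m) := by
  have hx' : (x : ℂ) ≠ 0 := by exact_mod_cast hx.ne'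
  rw [Complex.ofReal_pow, ← Complex.cpow_ofNat, ← Complex.cpow_mul]
  · nth_rw 2 [← Complex.cpow_one (x : ℂ)]
    rw [← Complex.cpow_add _ _ hx', ← Complex.cpow_natCast]
    push_cast
    ring_nf
  all_goals simp [← Complex.ofReal_log hx.le, Real.pi_pos, Real.pi_pos.le]

theorem integral_Ioo_pow_mul_one_sub_sq_cpow (m : ℕ) {w : ℂ} (hw : -1 < w.re) :
    ∫ u in Ioo (-1 : ℝ) 1, (u : ℂ) ^ (2 * m) * ((1 - u ^ 2 : ℝ) : ℂ) ^ w =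
      Complex.betaIntegral (m + 1 / 2) (w + 1) := by
  set f : ℝ → ℂ := fun u => (u : ℂ) ^ (2 * m) * ((1 - u ^ 2 : ℝ) : ℂ) ^ w
  set g : ℝ → ℂ := fun v => (v : ℂ) ^ ((m : ℂ) + 1 / 2 - 1) * (1 - (v : ℂ)) ^ (w + 1 - 1)
  have hsubst : ∀ x ∈ Ioo (0 : ℝ) 1, (2 * x) • g (x ^ 2) = 2 * f x := by
    intro x hx
    simp only [f, g, Complex.real_smul, add_sub_cancel_right]
    rw [← ofReal_sq_cpow_mul_self hx.1 m]
    push_cast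
    ring
  have hg : IntegrableOn g (Ioo 0 1) := by
    refine (intervalIntegrable_iff_integrableOn_Ioo_of_le zero_le_one).1
      (Complex.betaIntegral_convergent ?_ ?_)
    · simp only [Complex.add_re, Complex.natCast_re]
      norm_num
      positivity
    · simp only [Complex.add_re, Complex.one_re]
      linarith
  have hf : IntegrableOn f (Ioo 0 1) := by
    have h2f := ((integrableOn_Ioo_zero_one_comp_sq_iff g).2 hg).congr_fun hsubst measurableSet_Ioo
    refine IntegrableOn.congr_fun (h2f.const_mul (1 / 2 : ℂ)) (fun x _ => ?_) measurableSet_Ioo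
    ring
  have heven : ∀ u, f (-u) = f u := by
    intro u
    simp only [f, Complex.ofReal_neg, neg_sq, Even.neg_pow (even_two_mul m)]
  have hbeta : Complex.betaIntegral (m + 1 / 2) (w + 1) = ∫ v in Ioo 0 1, g v := by
    rw [Complex.betaIntegral, intervalIntegral.integral_of_le zero_le_one,
      integral_Ioc_eq_integral_Ioo]
  rw [integral_Ioo_neg_of_even zero_le_one heven hf, hbeta, ← integral_Ioo_zero_one_comp_sq g,
    setIntegral_congr_fun measurableSet_Ioo hsubst, integral_const_mul, two_smul, two_mul]

-- In the standard basis this map is lower triangular with diagonal `1, 1, L (0, 0, 1)`.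
theorem det_fst_prod_fst_snd_prod {R : Type*} [CommRing R] (L : R × R × R →ₗ[R] R) :
    LinearMap.det ((LinearMap.fst R R (R × R)).prod
      ((LinearMap.fst R R R ∘ₗ LinearMap.snd R R (R × R)).prod L)) = L (0, 0, 1) := by
  let b : Module.Basis (Fin 3) R (R × R × R) := (Pi.basisFun R (Fin 3)).map
    ((Fin.consLinearEquiv R (fun _ => R)).symm.trans
      ((LinearEquiv.refl R R).prodCongr (LinearEquiv.finTwoArrow R R)))
  rw [← LinearMap.det_toMatrix b, Matrix.det_fin_three]
  simp [b, LinearMap.toMatrix_apply, Fin.tail]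

noncomputable def scaleOffDiag (p : ℝ × ℝ × ℝ) : ℝ × ℝ × ℝ :=
  (p.1, p.2.1, √(p.1 * p.2.1) * p.2.2)

theorem differentiableAt_scaleOffDiag {p : ℝ × ℝ × ℝ} (hp : p.1 * p.2.1 ≠ 0) :
    DifferentiableAt ℝ scaleOffDiag p := by
  unfold scaleOffDiag
  fun_prop (disch := exact hp)

theorem det_fderiv_scaleOffDiag {p : ℝ × ℝ × ℝ} (hp : p.1 * p.2.1 ≠ 0) :
    (fderiv ℝ scaleOffDiag p).det = √(p.1 * p.2.1) := by
  have hoffDiag := ((hasFDerivAt_fst.mul hasFDerivAt_snd.fst).sqrt hp).mul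
    (hasFDerivAt_snd (p := p)).snd
  have h : HasFDerivAt scaleOffDiag _ p :=
    hasFDerivAt_fst.prodMk (hasFDerivAt_snd.fst.prodMk hoffDiag)
  rw [h.fderiv]
  exact (det_fst_prod_fst_snd_prod _).trans (by simp)

theorem image_scaleOffDiag :
    scaleOffDiag '' (Ioi 0 ×ˢ Ioi 0 ×ˢ Ioo (-1) 1) =
      {p : ℝ × ℝ × ℝ | 0 < p.1 ∧ 0 < p.1 * p.2.1 - p.2.2 ^ 2} := by
  ext q
  constructor
  · rintro ⟨⟨y₁, y₂, u⟩, ⟨hy₁, hy₂, hu⟩, rfl⟩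
    have hu2 : u ^ 2 < 1 := (sq_lt_one_iff_abs_lt_one u).2 (abs_lt.2 hu)
    have hy : 0 < y₁ * y₂ := mul_pos hy₁ hy₂
    refine ⟨hy₁, ?_⟩
    simp only [scaleOffDiag, mul_pow, Real.sq_sqrt hy.le]
    nlinarith
  · rintro ⟨hy₁, hdet⟩
    have hy : 0 < q.1 * q.2.1 := by nlinarith [sq_nonneg q.2.2]
    have hr : 0 < √(q.1 * q.2.1) := Real.sqrt_pos.2 hy
    refine ⟨(q.1, q.2.1, q.2.2 / √(q.1 * q.2.1)), ⟨hy₁, pos_of_mul_pos_right hy hy₁.le, ?_⟩, ?_⟩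
    · refine abs_lt.1 ((sq_lt_one_iff_abs_lt_one _).1 ?_)
      rw [div_pow, Real.sq_sqrt hy.le, div_lt_one hy]
      linarith
    · simp [scaleOffDiag, mul_div_cancel₀ _ hr.ne']

theorem injOn_scaleOffDiag : InjOn scaleOffDiag (Ioi 0 ×ˢ Ioi 0 ×ˢ Ioo (-1) 1) := by
  rintro ⟨y₁, y₂, u⟩ ⟨hy₁, hy₂, -⟩ ⟨y₁', y₂', u'⟩ - h
  simp only [scaleOffDiag, Prod.mk.injEq] at h
  obtain ⟨rfl, rfl, h⟩ := h
  have hr : √(y₁ * y₂) ≠ 0 := (Real.sqrt_pos.2 (mul_pos hy₁ hy₂)).ne'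
  simp [mul_left_cancel₀ hr h]

theorem sqrt_mul_pow_mul_cpow {y : ℝ} (hy : 0 < y) (n : ℕ) (s : ℂ) :
    (√y : ℂ) * (y : ℂ) ^ n * (y : ℂ) ^ (s - 3 / 2) = (y : ℂ) ^ (s + n - 1) := by
  have hy' : (y : ℂ) ≠ 0 := by exact_mod_cast hy.ne'
  rw [Real.sqrt_eq_rpow, Complex.ofReal_cpow hy.le, ← Complex.cpow_natCast,
    ← Complex.cpow_add _ _ hy', ← Complex.cpow_add _ _ hy']
  push_cast
  ring_nf

theorem sqrt_smul_integrand_scaleOffDiag (n₁ n₂ m : ℕ) (s : ℂ) {p : ℝ × ℝ × ℝ}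
    (hp : p ∈ Ioi 0 ×ˢ Ioi 0 ×ˢ Ioo (-1) 1) :
    √(p.1 * p.2.1) • (((scaleOffDiag p).1 : ℂ) ^ n₁ * ((scaleOffDiag p).2.1 : ℂ) ^ n₂ *
      ((scaleOffDiag p).2.2 : ℂ) ^ (2 * m) *
      (((scaleOffDiag p).1 * (scaleOffDiag p).2.1 - (scaleOffDiag p).2.2 ^ 2 : ℝ) : ℂ) ^
        (s - 3 / 2) *
      Complex.exp (-(((scaleOffDiag p).1 + (scaleOffDiag p).2.1 : ℝ) : ℂ))) =
    ((Real.exp (-p.1) : ℂ) * (p.1 : ℂ) ^ (s + ↑(m + n₁) - 1)) *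
      (((Real.exp (-p.2.1) : ℂ) * (p.2.1 : ℂ) ^ (s + ↑(m + n₂) - 1)) *
        ((p.2.2 : ℂ) ^ (2 * m) * ((1 - p.2.2 ^ 2 : ℝ) : ℂ) ^ (s - 3 / 2))) := by
  obtain ⟨y₁, y₂, u⟩ := p
  obtain ⟨hy₁, hy₂, hu⟩ := hp
  simp only [mem_Ioi, mem_Ioo] at hy₁ hy₂ hu
  have hu2 : 0 ≤ 1 - u ^ 2 := by nlinarith
  have hy : 0 ≤ y₁ * y₂ := (mul_pos hy₁ hy₂).le
  have hdet : y₁ * y₂ - (√(y₁ * y₂) * u) ^ 2 = y₁ * (y₂ * (1 - u ^ 2)) := by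
    rw [mul_pow, Real.sq_sqrt hy]
    ring
  have hoff : ((√(y₁ * y₂) * u : ℝ) : ℂ) ^ (2 * m) =
      (y₁ : ℂ) ^ m * (y₂ : ℂ) ^ m * (u : ℂ) ^ (2 * m) := by
    rw [pow_mul, ← Complex.ofReal_pow, mul_pow, Real.sq_sqrt hy]
    push_cast
    ring
  have hexp :
      Complex.exp (-((y₁ + y₂ : ℝ) : ℂ)) = (Real.exp (-y₁) : ℂ) * (Real.exp (-y₂) : ℂ) := by
    push_cast
    rw [← Complex.exp_add]
    ring_nf
  simp only [scaleOffDiag, Complex.real_smul]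
  rw [hdet, hoff, hexp, Complex.ofReal_mul,
    Complex.mul_cpow_ofReal_nonneg hy₁.le (mul_nonneg hy₂.le hu2), Complex.ofReal_mul,
    Complex.mul_cpow_ofReal_nonneg hy₂.le hu2, Real.sqrt_mul hy₁.le,
    Complex.ofReal_mul, ← sqrt_mul_pow_mul_cpow hy₁, ← sqrt_mul_pow_mul_cpow hy₂, pow_add, pow_add]
  ring

theorem integral_posDefCone_eq {E : Type*} [NormedAddCommGroup E] [NormedSpace ℝ E]
    (F : ℝ × ℝ × ℝ → E) :
    ∫ p in {p : ℝ × ℝ × ℝ | 0 < p.1 ∧ 0 < p.1 * p.2.1 - p.2.2 ^ 2}, F p =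
      ∫ p in Ioi 0 ×ˢ Ioi 0 ×ˢ Ioo (-1) 1, √(p.1 * p.2.1) • F (scaleOffDiag p) := by
  have hS : MeasurableSet (Ioi (0 : ℝ) ×ˢ Ioi (0 : ℝ) ×ˢ Ioo (-1 : ℝ) 1) :=
    measurableSet_Ioi.prod (measurableSet_Ioi.prod measurableSet_Ioo)
  have hpos : ∀ p ∈ Ioi (0 : ℝ) ×ˢ Ioi (0 : ℝ) ×ˢ Ioo (-1 : ℝ) 1, p.1 * p.2.1 ≠ 0 :=
    fun p hp => (mul_pos hp.1 hp.2.1).ne'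
  have : (volume : Measure (ℝ × ℝ × ℝ)).IsAddHaarMeasure := Measure.prod.instIsAddHaarMeasure _ _
  rw [← image_scaleOffDiag, integral_image_eq_integral_abs_det_fderiv_smul volume hS
    (fun p hp => (differentiableAt_scaleOffDiag (hpos p hp)).hasFDerivAt.hasFDerivWithinAt)
    injOn_scaleOffDiag]
  refine setIntegral_congr_fun hS fun p hp => ?_
  rw [det_fderiv_scaleOffDiag (hpos p hp), abs_of_nonneg (Real.sqrt_nonneg _)]

theorem integral_posDefCone_eq_Gamma_mul_Gamma_mul_betaIntegral (n₁ n₂ m : ℕ) {s : ℂ}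
    (hs : 1 / 2 < s.re) :
    ∫ p in {p : ℝ × ℝ × ℝ | 0 < p.1 ∧ 0 < p.1 * p.2.1 - p.2.2 ^ 2},
      (p.1 : ℂ) ^ n₁ * (p.2.1 : ℂ) ^ n₂ * (p.2.2 : ℂ) ^ (2 * m) *
        ((p.1 * p.2.1 - p.2.2 ^ 2 : ℝ) : ℂ) ^ (s - 3 / 2) *
        Complex.exp (-((p.1 + p.2.1 : ℝ) : ℂ)) =
    Complex.Gamma (s + ↑(m + n₁)) * Complex.Gamma (s + ↑(m + n₂)) *
      Complex.betaIntegral (m + 1 / 2) (s - 1 / 2) := by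
  have hS : MeasurableSet (Ioi (0 : ℝ) ×ˢ Ioi (0 : ℝ) ×ˢ Ioo (-1 : ℝ) 1) :=
    measurableSet_Ioi.prod (measurableSet_Ioi.prod measurableSet_Ioo)
  have hre : ∀ n : ℕ, 0 < (s + n).re := fun n => by
    simp only [Complex.add_re, Complex.natCast_re]
    linarith [(Nat.cast_nonneg n : (0 : ℝ) ≤ n)]
  rw [integral_posDefCone_eq,
    setIntegral_congr_fun hS fun p hp => sqrt_smul_integrand_scaleOffDiag n₁ n₂ m s hp,
    Measure.volume_eq_prod,
    setIntegral_prod_mul (fun y : ℝ => (rexp (-y) : ℂ) * (y : ℂ) ^ (s + ↑(m + n₁) - 1))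
      (fun q : ℝ × ℝ => (rexp (-q.1) : ℂ) * (q.1 : ℂ) ^ (s + ↑(m + n₂) - 1) *
        ((q.2 : ℂ) ^ (2 * m) * ((1 - q.2 ^ 2 : ℝ) : ℂ) ^ (s - 3 / 2))),
    Measure.volume_eq_prod,
    setIntegral_prod_mul (fun y : ℝ => (rexp (-y) : ℂ) * (y : ℂ) ^ (s + ↑(m + n₂) - 1))
      (fun u : ℝ => (u : ℂ) ^ (2 * m) * ((1 - u ^ 2 : ℝ) : ℂ) ^ (s - 3 / 2)),
    integral_Ioo_pow_mul_one_sub_sq_cpow m (by simp; linarith),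
    Complex.Gamma_eq_integral (hre _), Complex.Gamma_eq_integral (hre _)]
  rw [Complex.GammaIntegral, Complex.GammaIntegral, show s - 3 / 2 + 1 = s - 1 / 2 by ring,
    mul_assoc]

theorem integral_even_offdiag (n1 n2 m3 : ℕ) (s : ℂ) (hs : 1 / 2 < s.re) :
    ∫ p in {p : ℝ × ℝ × ℝ | 0 < p.1 ∧ 0 < p.1 * p.2.1 - p.2.2 ^ 2},
      (p.1 : ℂ) ^ n1 * (p.2.1 : ℂ) ^ n2 * (p.2.2 : ℂ) ^ (2 * m3) *
        ((p.1 * p.2.1 - p.2.2 ^ 2 : ℝ) : ℂ) ^ (s - 3 / 2) *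
        Complex.exp (-((p.1 + p.2.1 : ℝ) : ℂ)) =
    Gamma2 s * (((2 * m3).factorial : ℂ) / (2 ^ (2 * m3) * (m3.factorial : ℂ))) *
      ∑ k ∈ Finset.range (min n1 n2 + 1),
        (-1) ^ k * (n1.choose k : ℂ) * (n2.choose k : ℂ) * (k.factorial : ℂ) *
          ∏ l ∈ Finset.range (n1 + n2 + m3 - k), (s + l) := by
  have hpole : ∀ k : ℕ, s ≠ -k := Complex.ne_neg_natCast_of_re_pos (by linarith)
  have hB := Complex.Gamma_mul_Gamma_eq_betaIntegral (s := m3 + 1 / 2) (t := s - 1 / 2)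
    (by simp; positivity) (by simp; linarith)
  rw [show (m3 : ℂ) + 1 / 2 + (s - 1 / 2) = s + m3 by ring, Complex.Gamma_nat_add_half,
    Complex.Gamma_add_nat_eq_mul hpole] at hB
  rw [integral_posDefCone_eq_Gamma_mul_Gamma_mul_betaIntegral n1 n2 m3 hs,
    Complex.Gamma_add_nat_eq_mul hpole, Complex.Gamma_add_nat_eq_mul hpole, ascPochhammer_add_eval,
    ascPochhammer_add_eval, sum_choose_mul_prod_range_eq, Gamma2]
  linear_combination (-(Complex.Gamma s * (ascPochhammer ℂ m3).eval s *
    (ascPochhammer ℂ n1).eval (s + m3) * (ascPochhammer ℂ n2).eval (s + m3))) * hB
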